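/- Let A₁,…,Aₘ be real n×n matrices all of whose entries are nonnegative. Then (1/m)·ρ(A₁ + ··· + Aₘ) ≤ ρ(A₁,…,Aₘ) ≤ ρ(A₁ + ··· + Aₘ), where ρ(A₁ + ··· + Aₘ) is the spectral radius of the single matrix A₁ + ··· + Aₘ. -/

import Mathlib

open scoped Kronecker

/-- The ℓ₂ operator norm of a square real matrix. -/
noncomputable def l2OpNorm {ι : Type*} [Fintype ι] [DecidableEq ι]
    (A : Matrix ι ι ℝ) : ℝ :=
  ‖Matrix.toEuclideanCLM (𝕜 := ℝ) A‖

/-- The product `A_{σ_k} ⋯ A_{σ_1}` associated to the word `σ`. -/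
noncomputable def wordProd {ι : Type*} [Fintype ι] [DecidableEq ι] {m k : ℕ}
    (A : Fin m → Matrix ι ι ℝ) (σ : Fin k → Fin m) : Matrix ι ι ℝ :=
  (List.ofFn fun i => A (σ i)).reverse.prod

/-- The joint spectral radius of `A₁, …, Aₘ` (w.r.t. the ℓ₂ operator norm). -/
noncomputable def jsr {ι : Type*} [Fintype ι] [DecidableEq ι] {m : ℕ}
    (A : Fin m → Matrix ι ι ℝ) : ℝ :=
  Filter.atTop.limsup fun k : ℕ =>
    ⨆ σ : Fin k → Fin m, l2OpNorm (wordProd A σ) ^ ((1 : ℝ) / (k : ℝ))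

/-- The spectral radius of a single matrix, `ρ(A) = lim_k ‖A^k‖^{1/k}`. -/
noncomputable def specRad {ι : Type*} [Fintype ι] [DecidableEq ι]
    (A : Matrix ι ι ℝ) : ℝ :=
  Filter.atTop.limsup fun k : ℕ => l2OpNorm (A ^ k) ^ ((1 : ℝ) / (k : ℝ))

section Aux

open Filter

lemma l2OpNorm_nonneg {ι : Type*} [Fintype ι] [DecidableEq ι] (A : Matrix ι ι ℝ) :
    0 ≤ l2OpNorm A := norm_nonneg _

/-- Entries of a product of entrywise-nonnegative matrices are nonnegative. -/
lemma entry_nonneg_list_prod {n : ℕ} :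
    ∀ (l : List (Matrix (Fin n) (Fin n) ℝ)),
      (∀ M ∈ l, ∀ a b, 0 ≤ M a b) → ∀ a b, 0 ≤ l.prod a b
  | [], _, a, b => by
      simp only [List.prod_nil, Matrix.one_apply]
      split <;> norm_num
  | (M :: l), h, a, b => by
      rw [List.prod_cons, Matrix.mul_apply]
      exact Finset.sum_nonneg fun j _ =>
        mul_nonneg (h M (by simp) a j)
          (entry_nonneg_list_prod l (fun N hN => h N (by simp [hN])) j b)

lemma wordProd_entry_nonneg {n m k : ℕ} (A : Fin m → Matrix (Fin n) (Fin n) ℝ)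
    (hpos : ∀ i a b, 0 ≤ A i a b) (σ : Fin k → Fin m) (a b : Fin n) :
    0 ≤ wordProd A σ a b := by
  apply entry_nonneg_list_prod
  intro M hM
  rw [List.mem_reverse, List.mem_ofFn] at hM
  obtain ⟨i, rfl⟩ := hM
  exact hpos _

lemma wordProd_cons {n m k : ℕ} (A : Fin m → Matrix (Fin n) (Fin n) ℝ)
    (j : Fin m) (τ : Fin k → Fin m) :
    wordProd A (Fin.cons j τ) = wordProd A τ * A j := by
  simp [wordProd, List.ofFn_succ, List.prod_append]

/-- The sum of all word products of length `k` is `(∑ᵢ Aᵢ)^k`. -/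
lemma sum_wordProd {n m : ℕ} (A : Fin m → Matrix (Fin n) (Fin n) ℝ) :
    ∀ k : ℕ, ∑ σ : Fin k → Fin m, wordProd A σ = (∑ i, A i) ^ k
  | 0 => by
      simp [wordProd]
  | (k + 1) => by
      have h1 : ∑ p : Fin m × (Fin k → Fin m), wordProd A p.2 * A p.1
          = ∑ σ : Fin (k + 1) → Fin m, wordProd A σ :=
        Fintype.sum_equiv (Fin.consEquiv fun _ => Fin m) _ _ fun p => by
          exact (wordProd_cons A p.1 p.2).symm
      rw [← h1, Fintype.sum_prod_type, pow_succ, ← sum_wordProd A k]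
      rw [Finset.sum_comm]
      simp [← Finset.sum_mul, ← Finset.mul_sum]

lemma wordProd_entry_le {n m k : ℕ} (A : Fin m → Matrix (Fin n) (Fin n) ℝ)
    (hpos : ∀ i a b, 0 ≤ A i a b) (σ : Fin k → Fin m) (a b : Fin n) :
    wordProd A σ a b ≤ ((∑ i, A i) ^ k) a b := by
  rw [← sum_wordProd A k, Matrix.sum_apply]
  exact Finset.single_le_sum
    (fun τ _ => wordProd_entry_nonneg A hpos τ a b) (Finset.mem_univ σ)

/-- Monotonicity of the ℓ₂ operator norm under entrywise domination of
nonnegative matrices. -/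
lemma l2OpNorm_le_of_entrywise {n : ℕ} {B C : Matrix (Fin n) (Fin n) ℝ}
    (hB : ∀ a b, 0 ≤ B a b) (hBC : ∀ a b, B a b ≤ C a b) :
    l2OpNorm B ≤ l2OpNorm C := by
  refine ContinuousLinearMap.opNorm_le_bound _ (norm_nonneg _) fun x => ?_
  set y : EuclideanSpace ℝ (Fin n) := (WithLp.equiv 2 _).symm (fun i => |x i|) with hy_def
  have hyi : ∀ i, y i = |x i| := fun i => rfl
  have hy : ‖y‖ = ‖x‖ := by
    rw [EuclideanSpace.norm_eq, EuclideanSpace.norm_eq]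
    congr 1
    refine Finset.sum_congr rfl fun i _ => ?_
    rw [hyi, Real.norm_eq_abs, Real.norm_eq_abs, abs_abs]
  have happB : ∀ i, (Matrix.toEuclideanCLM (𝕜 := ℝ) B x) i = ∑ j, B i j * x j := fun i => rfl
  have happC : ∀ i, (Matrix.toEuclideanCLM (𝕜 := ℝ) C y) i = ∑ j, C i j * |x j| := fun i => rfl
  have key : ‖(Matrix.toEuclideanCLM (𝕜 := ℝ) B) x‖ ≤ ‖(Matrix.toEuclideanCLM (𝕜 := ℝ) C) y‖ := by
    rw [EuclideanSpace.norm_eq, EuclideanSpace.norm_eq]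
    apply Real.sqrt_le_sqrt
    refine Finset.sum_le_sum fun i _ => ?_
    have habs : |(Matrix.toEuclideanCLM (𝕜 := ℝ) B x) i|
        ≤ |(Matrix.toEuclideanCLM (𝕜 := ℝ) C y) i| := by
      rw [happB, happC]
      have h1 : abs (∑ j, B i j * x j) ≤ ∑ j, B i j * abs (x j) := by
        refine (Finset.abs_sum_le_sum_abs _ _).trans ?_
        refine Finset.sum_le_sum fun j _ => ?_
        rw [abs_mul, abs_of_nonneg (hB i j)]
      have h2 : ∑ j, B i j * abs (x j) ≤ ∑ j, C i j * abs (x j) :=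
        Finset.sum_le_sum fun j _ => mul_le_mul_of_nonneg_right (hBC i j) (abs_nonneg _)
      have h3 : (0:ℝ) ≤ ∑ j, C i j * abs (x j) :=
        Finset.sum_nonneg fun j _ =>
          mul_nonneg ((hB i j).trans (hBC i j)) (abs_nonneg _)
      exact (h1.trans h2).trans (le_abs_self _)
    rw [Real.norm_eq_abs, Real.norm_eq_abs]
    exact pow_le_pow_left₀ (abs_nonneg _) habs 2
  calc ‖(Matrix.toEuclideanCLM (𝕜 := ℝ) B) x‖
      ≤ ‖(Matrix.toEuclideanCLM (𝕜 := ℝ) C) y‖ := key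
    _ ≤ ‖Matrix.toEuclideanCLM (𝕜 := ℝ) C‖ * ‖y‖ := ContinuousLinearMap.le_opNorm _ _
    _ = l2OpNorm C * ‖x‖ := by rw [hy]; rfl

end Aux

/-- For matrices with nonnegative entries,
`(1/m) ρ(∑ᵢ Aᵢ) ≤ ρ(A₁, …, Aₘ) ≤ ρ(∑ᵢ Aᵢ)`. -/
theorem jsr_bounds_of_nonneg_entries {n m : ℕ} (hm : 0 < m)
    (A : Fin m → Matrix (Fin n) (Fin n) ℝ)
    (hpos : ∀ i a b, 0 ≤ A i a b) :
    (1 / (m : ℝ)) * specRad (∑ i, A i) ≤ jsr A ∧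
      jsr A ≤ specRad (∑ i, A i) := by
  haveI : Nonempty (Fin m) := ⟨⟨0, hm⟩⟩
  set S : Matrix (Fin n) (Fin n) ℝ := ∑ i, A i with hS
  set f : ℕ → ℝ := fun k =>
    ⨆ σ : Fin k → Fin m, l2OpNorm (wordProd A σ) ^ ((1 : ℝ) / (k : ℝ)) with hf_def
  set g : ℕ → ℝ := fun k => l2OpNorm (S ^ k) ^ ((1 : ℝ) / (k : ℝ)) with hg_def
  have hjsr : jsr A = Filter.atTop.limsup f := rfl
  have hspec : specRad S = Filter.atTop.limsup g := rfl
  have hnormle : ∀ (k : ℕ) (σ : Fin k → Fin m),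
      l2OpNorm (wordProd A σ) ≤ l2OpNorm (S ^ k) := fun k σ =>
    l2OpNorm_le_of_entrywise (wordProd_entry_nonneg A hpos σ)
      (wordProd_entry_le A hpos σ)
  have hbddrange : ∀ k : ℕ, BddAbove (Set.range fun σ : Fin k → Fin m =>
      l2OpNorm (wordProd A σ) ^ ((1 : ℝ) / (k : ℝ))) :=
    fun k => (Set.finite_range _).bddAbove
  have hf_nonneg : ∀ k, 0 ≤ f k := fun k =>
    Real.iSup_nonneg fun σ => Real.rpow_nonneg (l2OpNorm_nonneg _) _
  have hg_nonneg : ∀ k, 0 ≤ g k := fun k => Real.rpow_nonneg (l2OpNorm_nonneg _) _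
  have hfg : ∀ k, f k ≤ g k := by
    intro k
    refine ciSup_le fun σ => ?_
    exact Real.rpow_le_rpow (l2OpNorm_nonneg _) (hnormle k σ) (by positivity)
  have hg_bd : ∀ k, g k ≤ max (l2OpNorm S) 1 := by
    intro k
    rcases k with _ | k
    · show l2OpNorm (S ^ 0) ^ ((1 : ℝ) / ((0 : ℕ) : ℝ)) ≤ max (l2OpNorm S) 1
      rw [Nat.cast_zero, div_zero, Real.rpow_zero]
      exact le_max_right _ _
    · refine le_trans ?_ (le_max_left _ _)
      have h1 : l2OpNorm (S ^ (k + 1)) ≤ l2OpNorm S ^ (k + 1) := by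
        unfold l2OpNorm
        rw [map_pow]
        exact norm_pow_le' _ (Nat.succ_pos k)
      have h2 : g (k + 1) ≤ (l2OpNorm S ^ (k + 1)) ^ ((1 : ℝ) / ((k + 1 : ℕ) : ℝ)) :=
        Real.rpow_le_rpow (l2OpNorm_nonneg _) h1 (by positivity)
      refine h2.trans (le_of_eq ?_)
      rw [← Real.rpow_natCast (l2OpNorm S) (k + 1),
        ← Real.rpow_mul (l2OpNorm_nonneg S), mul_one_div, div_self, Real.rpow_one]
      exact_mod_cast Nat.succ_ne_zero k
  have hbdd_f : Filter.IsBoundedUnder (· ≤ ·) Filter.atTop f :=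
    Filter.isBoundedUnder_of ⟨max (l2OpNorm S) 1, fun k => (hfg k).trans (hg_bd k)⟩
  have hbdd_g : Filter.IsBoundedUnder (· ≤ ·) Filter.atTop g :=
    Filter.isBoundedUnder_of ⟨max (l2OpNorm S) 1, hg_bd⟩
  have hupper : jsr A ≤ specRad S := by
    rw [hjsr, hspec]
    exact Filter.limsup_le_limsup (Filter.Eventually.of_forall hfg)
      (Filter.isCoboundedUnder_le_of_le _ hf_nonneg) hbdd_g
  have hm' : (0 : ℝ) < m := by exact_mod_cast hm
  -- key pointwise estimate: for `k ≥ 1`, `g k ≤ m * f k`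
  have hkey : ∀ k : ℕ, 1 ≤ k → g k ≤ (m : ℝ) * f k := by
    intro k hk
    obtain ⟨σ₀, hσ₀⟩ := Finite.exists_max fun σ : Fin k → Fin m => l2OpNorm (wordProd A σ)
    have h1 : l2OpNorm (S ^ k) ≤ (m : ℝ) ^ k * l2OpNorm (wordProd A σ₀) := by
      have hsum : l2OpNorm (S ^ k) ≤ ∑ σ : Fin k → Fin m, l2OpNorm (wordProd A σ) := by
        unfold l2OpNorm
        rw [← sum_wordProd A k, map_sum]
        exact norm_sum_le _ _
      refine hsum.trans ?_
      have := Finset.sum_le_card_nsmul Finset.univ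
        (fun σ : Fin k → Fin m => l2OpNorm (wordProd A σ))
        (l2OpNorm (wordProd A σ₀)) (fun σ _ => hσ₀ σ)
      rw [Finset.card_univ, Fintype.card_fun, Fintype.card_fin, Fintype.card_fin,
        nsmul_eq_mul] at this
      refine this.trans (le_of_eq ?_)
      push_cast
      ring
    have h2 : g k ≤ ((m : ℝ) ^ k * l2OpNorm (wordProd A σ₀)) ^ ((1 : ℝ) / (k : ℝ)) :=
      Real.rpow_le_rpow (l2OpNorm_nonneg _) h1 (by positivity)
    have h3 : ((m : ℝ) ^ k * l2OpNorm (wordProd A σ₀)) ^ ((1 : ℝ) / (k : ℝ))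
        = (m : ℝ) * l2OpNorm (wordProd A σ₀) ^ ((1 : ℝ) / (k : ℝ)) := by
      rw [Real.mul_rpow (by positivity) (l2OpNorm_nonneg _),
        ← Real.rpow_natCast (m : ℝ) k, ← Real.rpow_mul (by positivity), mul_one_div,
        div_self, Real.rpow_one]
      exact_mod_cast Nat.one_le_iff_ne_zero.mp hk
    have h4 : l2OpNorm (wordProd A σ₀) ^ ((1 : ℝ) / (k : ℝ)) ≤ f k :=
      le_ciSup (hbddrange k) σ₀
    calc g k ≤ (m : ℝ) * l2OpNorm (wordProd A σ₀) ^ ((1 : ℝ) / (k : ℝ)) := by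
          rw [← h3]; exact h2
      _ ≤ (m : ℝ) * f k := mul_le_mul_of_nonneg_left h4 hm'.le
  have hlower : specRad S ≤ (m : ℝ) * jsr A := by
    rw [hspec]
    refine le_of_forall_pos_le_add fun ε hε => ?_
    have hfev : ∀ᶠ k in Filter.atTop, f k < jsr A + ε / m := by
      refine Filter.eventually_lt_of_limsup_lt ?_ hbdd_f
      rw [← hjsr]
      have : 0 < ε / m := by positivity
      linarith [this]
    have hev : ∀ᶠ k in Filter.atTop, g k ≤ (m : ℝ) * jsr A + ε := by
      filter_upwards [hfev, Filter.eventually_ge_atTop 1] with k hk1 hk2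
      calc g k ≤ (m : ℝ) * f k := hkey k hk2
        _ ≤ (m : ℝ) * (jsr A + ε / m) := mul_le_mul_of_nonneg_left hk1.le hm'.le
        _ = (m : ℝ) * jsr A + ε := by field_simp
    exact Filter.limsup_le_of_le (Filter.isCoboundedUnder_le_of_le _ hg_nonneg) hev
  refine ⟨?_, hupper⟩
  calc (1 / (m : ℝ)) * specRad S ≤ (1 / (m : ℝ)) * ((m : ℝ) * jsr A) := by
        apply mul_le_mul_of_nonneg_left hlower (by positivity)
    _ = jsr A := by field_simp
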